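/- Let N ≥ 1, let 1 ≤ q < 2 and let Ω ⊆ ℝ^N be a nonempty bounded open set with λ_{2,q}(Ω) > 0. Then the infimum, over all nonnegative smooth functions φ : ℝ^N → ℝ with compact support contained in Ω, of the quantity (1/2)·∫_Ω |∇φ|² dx − (1/q)·∫_Ω φ^q dx equals ((q−2)/(2q))·(1/λ_{2,q}(Ω))^{q/(2−q)}. -/

import Mathlib

open MeasureTheory

/-- The optimal Poincaré constant `λ_{2,γ}(Ω)`: the infimum of `∫_Ω |∇φ|²` over smooth
compactly supported functions `φ` with support in `Ω` and `(∫_Ω |φ|^γ)^(1/γ) = 1`. -/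
noncomputable def lambda2 {N : ℕ} (γ : ℝ) (Ω : Set (EuclideanSpace ℝ (Fin N))) : ℝ :=
  sInf { t : ℝ | ∃ φ : EuclideanSpace ℝ (Fin N) → ℝ, ContDiff ℝ (⊤ : ℕ∞) φ ∧
    HasCompactSupport φ ∧ tsupport φ ⊆ Ω ∧ (∫ x in Ω, |φ x| ^ γ) ^ (1 / γ) = 1 ∧
    t = ∫ x in Ω, ‖gradient φ x‖ ^ 2 }

/-!
With `λ = λ_{2,q}(Ω)`, the definition of `λ` applied to `φ / ‖φ‖_q` gives
`∫ |∇φ|² ≥ λ ‖φ‖_q²`, so the energy of `φ ≥ 0` is at least `λ t² / 2 - t^q / q` with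
`t = ‖φ‖_q`. By weighted AM-GM this profile is minimised at `t₀ = λ^(-1/(2-q))`, with value
`((q-2)/(2q)) λ^(-q/(2-q))`. Conversely, take `φ` nearly optimal for `λ`; replacing it by
`√(φ² + δ²) - δ` makes it nonnegative without increasing `∫ |∇φ|²` and, for small `δ`, loses
little of `∫ |φ|^q`, so `t₀` times it has energy close to the minimum.
-/

open InnerProductSpace Filter Topology

section Gradient

variable {F : Type*} [NormedAddCommGroup F] [InnerProductSpace ℝ F] [CompleteSpace F]

lemma norm_gradient_eq_norm_fderiv (f : F → ℝ) (x : F) : ‖gradient f x‖ = ‖fderiv ℝ f x‖ :=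
  (toDual ℝ F).symm.norm_map _

lemma HasDerivAt.norm_gradient_comp {f : F → ℝ} {g : ℝ → ℝ} {g' : ℝ} {x : F}
    (hg : HasDerivAt g g' (f x)) (hf : DifferentiableAt ℝ f x) :
    ‖gradient (fun y => g (f y)) x‖ = |g'| * ‖gradient f x‖ := by
  have h : HasFDerivAt (fun y => g (f y)) (g' • fderiv ℝ f x) x :=
    hg.comp_hasFDerivAt x hf.hasFDerivAt
  rw [norm_gradient_eq_norm_fderiv, norm_gradient_eq_norm_fderiv, h.fderiv, norm_smul,
    Real.norm_eq_abs]

lemma ContDiff.continuous_gradient {f : F → ℝ} (hf : ContDiff ℝ 1 f) :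
    Continuous (gradient f) :=
  (toDual ℝ F).symm.continuous.comp (hf.continuous_fderiv one_ne_zero)

lemma HasCompactSupport.gradient {f : F → ℝ} (hf : HasCompactSupport f) :
    HasCompactSupport (gradient f) :=
  (hf.fderiv (𝕜 := ℝ)).comp_left (map_zero _)

lemma ContDiff.integrable_norm_gradient_sq [MeasurableSpace F] [OpensMeasurableSpace F]
    {μ : Measure F} [IsFiniteMeasureOnCompacts μ] {f : F → ℝ} (hf : ContDiff ℝ 1 f)
    (hcs : HasCompactSupport f) : Integrable (fun x => ‖gradient f x‖ ^ 2) μ := by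
  have h1 : Continuous (fun x => ‖gradient f x‖ ^ 2) := hf.continuous_gradient.norm.pow 2
  have h2 : HasCompactSupport (fun x => ‖gradient f x‖ ^ 2) :=
    hcs.gradient.norm.comp_left (g := fun r : ℝ => r ^ 2) (zero_pow two_ne_zero)
  exact h1.integrable_of_hasCompactSupport h2

lemma integral_norm_gradient_const_mul_sq [MeasurableSpace F] (μ : Measure F) {f : F → ℝ}
    (hf : Differentiable ℝ f) (c : ℝ) :
    ∫ x, ‖gradient (fun y => c * f y) x‖ ^ 2 ∂μ = c ^ 2 * ∫ x, ‖gradient f x‖ ^ 2 ∂μ := by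
  simp_rw [((hasDerivAt_id' _).const_mul c).norm_gradient_comp (hf _), mul_one, mul_pow,
    sq_abs]
  exact integral_const_mul _ _

end Gradient

noncomputable def smoothAbs (δ y : ℝ) : ℝ := √(y ^ 2 + δ ^ 2) - δ

section SmoothAbs

variable {δ : ℝ}

lemma smoothAbs_nonneg (δ y : ℝ) : 0 ≤ smoothAbs δ y := by
  rw [smoothAbs, sub_nonneg]
  exact Real.le_sqrt_of_sq_le (by nlinarith)

lemma smoothAbs_le_abs (hδ : 0 ≤ δ) (y : ℝ) : smoothAbs δ y ≤ |y| := by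
  rw [smoothAbs, sub_le_iff_le_add]
  exact Real.sqrt_le_iff.2 ⟨add_nonneg (abs_nonneg y) hδ, by nlinarith [sq_abs y, abs_nonneg y]⟩

lemma smoothAbs_zero (hδ : 0 ≤ δ) : smoothAbs δ 0 = 0 := by
  simp [smoothAbs, Real.sqrt_sq hδ]

lemma hasDerivAt_smoothAbs (hδ : 0 < δ) (y : ℝ) :
    HasDerivAt (smoothAbs δ) (y / √(y ^ 2 + δ ^ 2)) y := by
  have hpos : 0 < y ^ 2 + δ ^ 2 := by positivity
  have h := (((hasDerivAt_pow 2 y).add_const (δ ^ 2)).sqrt hpos.ne').sub_const δ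
  refine h.congr_deriv ?_
  field_simp
  ring

lemma abs_div_sqrt_sq_add_sq_le_one (y : ℝ) : |y / √(y ^ 2 + δ ^ 2)| ≤ 1 := by
  rw [abs_div, abs_of_nonneg (Real.sqrt_nonneg _)]
  exact div_le_one_of_le₀ (Real.abs_le_sqrt (by nlinarith)) (Real.sqrt_nonneg _)

lemma contDiff_smoothAbs (hδ : 0 < δ) {n : WithTop ℕ∞} : ContDiff ℝ n (smoothAbs δ) :=
  contDiff_iff_contDiffAt.2 fun y =>
    ((Real.contDiffAt_sqrt (by positivity)).comp y
      ((contDiff_id.pow 2).add contDiff_const).contDiffAt).sub contDiffAt_const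

lemma continuous_smoothAbs (δ : ℝ) : Continuous (smoothAbs δ) := by
  unfold smoothAbs; fun_prop

lemma tendsto_smoothAbs (y : ℝ) : Tendsto (fun δ => smoothAbs δ y) (𝓝 0) (𝓝 |y|) := by
  have h : Continuous fun δ => smoothAbs δ y := by unfold smoothAbs; fun_prop
  simpa [smoothAbs, Real.sqrt_sq_eq_abs] using h.tendsto 0

end SmoothAbs

lemma tendsto_integral_smoothAbs_rpow {X : Type*} [TopologicalSpace X] [MeasurableSpace X]
    [OpensMeasurableSpace X] {μ : Measure X} [IsFiniteMeasureOnCompacts μ] {f : X → ℝ} {q : ℝ}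
    (hf : Continuous f) (hcs : HasCompactSupport f) (hq : 0 < q) :
    Tendsto (fun δ => ∫ x, smoothAbs δ (f x) ^ q ∂μ) (𝓝[>] 0) (𝓝 (∫ x, |f x| ^ q ∂μ)) := by
  refine tendsto_integral_filter_of_dominated_convergence (fun x => |f x| ^ q) ?_ ?_ ?_ ?_
  · exact Eventually.of_forall fun δ =>
      (((continuous_smoothAbs δ).comp hf).rpow_const fun _ => Or.inr hq.le).aestronglyMeasurable
  · filter_upwards [self_mem_nhdsWithin] with δ (hδ : 0 < δ)
    refine Eventually.of_forall fun x => ?_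
    rw [Real.norm_of_nonneg (Real.rpow_nonneg (smoothAbs_nonneg _ _) _)]
    exact Real.rpow_le_rpow (smoothAbs_nonneg _ _) (smoothAbs_le_abs hδ.le _) hq.le
  · exact (hf.abs.rpow_const fun _ => Or.inr hq.le).integrable_of_hasCompactSupport
      (hcs.abs.comp_left (g := fun r : ℝ => r ^ q) (Real.zero_rpow hq.ne'))
  · exact Eventually.of_forall fun x =>
      ((Real.continuousAt_rpow_const _ q (Or.inr hq.le)).tendsto.comp
        (tendsto_smoothAbs (f x))).mono_left nhdsWithin_le_nhds

lemma exists_nonneg_of_lt_integral_abs_rpow {F : Type*} [NormedAddCommGroup F]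
    [InnerProductSpace ℝ F] [CompleteSpace F] [MeasurableSpace F] [OpensMeasurableSpace F]
    {μ : Measure F} [IsFiniteMeasureOnCompacts μ] {f : F → ℝ} {q : ℝ}
    (hf : ContDiff ℝ (⊤ : ℕ∞) f) (hcs : HasCompactSupport f) (hq : 0 < q) {b : ℝ}
    (hb : b < ∫ x, |f x| ^ q ∂μ) :
    ∃ g : F → ℝ, ContDiff ℝ (⊤ : ℕ∞) g ∧ HasCompactSupport g ∧ tsupport g ⊆ tsupport f ∧
      (∀ x, 0 ≤ g x) ∧ ∫ x, ‖gradient g x‖ ^ 2 ∂μ ≤ ∫ x, ‖gradient f x‖ ^ 2 ∂μ ∧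
      b < ∫ x, g x ^ q ∂μ := by
  obtain ⟨δ, hbδ, hδ : 0 < δ⟩ :=
    (((tendsto_integral_smoothAbs_rpow hf.continuous hcs hq).eventually
      (lt_mem_nhds hb)).and self_mem_nhdsWithin).exists
  have hgrad (x : F) : ‖gradient (fun y => smoothAbs δ (f y)) x‖ ≤ ‖gradient f x‖ := by
    rw [(hasDerivAt_smoothAbs hδ (f x)).norm_gradient_comp (hf.differentiable (by simp) x)]
    exact mul_le_of_le_one_left (norm_nonneg _) (abs_div_sqrt_sq_add_sq_le_one _)
  refine ⟨fun y => smoothAbs δ (f y), (contDiff_smoothAbs hδ).comp hf,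
    hcs.comp_left (smoothAbs_zero hδ.le), tsupport_comp_subset (smoothAbs_zero hδ.le) f,
    fun x => smoothAbs_nonneg _ _, ?_, hbδ⟩
  exact integral_mono_of_nonneg (ae_of_all _ fun x => by positivity)
    ((hf.of_le (by simp)).integrable_norm_gradient_sq hcs)
    (ae_of_all _ fun x => pow_le_pow_left₀ (norm_nonneg _) (hgrad x) 2)

noncomputable def laneEmdenProfile (q lam t : ℝ) : ℝ := lam * t ^ 2 / 2 - t ^ q / q

section Profile

variable {q lam : ℝ}

lemma le_laneEmdenProfile (hq : 0 < q) (hq2 : q < 2) (hlam : 0 < lam) {t : ℝ} (ht : 0 ≤ t) :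
    (q - 2) / (2 * q) * (1 / lam) ^ (q / (2 - q)) ≤ laneEmdenProfile q lam t := by
  have h2q : 2 - q ≠ 0 := (sub_pos.2 hq2).ne'
  set M := (1 / lam) ^ (q / (2 - q))
  have hM : 0 ≤ M := by positivity
  have hamgm := Real.geom_mean_le_arith_mean2_weighted (w₁ := q / 2) (w₂ := 1 - q / 2)
    (p₁ := lam * t ^ 2) (p₂ := M) (by positivity) (by linarith) (by positivity) hM (by ring)
  have hgeom : (lam * t ^ 2) ^ (q / 2) * M ^ (1 - q / 2) = t ^ q := by
    have hexp : q / (2 - q) * (1 - q / 2) = q / 2 := by field_simp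
    rw [Real.mul_rpow hlam.le (by positivity), ← Real.rpow_natCast t 2, ← Real.rpow_mul ht,
      ← Real.rpow_mul (by positivity), hexp, mul_right_comm, ← Real.mul_rpow hlam.le
      (by positivity), mul_one_div_cancel hlam.ne', Real.one_rpow, one_mul,
      Nat.cast_ofNat, mul_div_cancel₀ q two_ne_zero]
  rw [hgeom] at hamgm
  rw [laneEmdenProfile, div_mul_eq_mul_div, div_le_iff₀ (by positivity)]
  have : (lam * t ^ 2 / 2 - t ^ q / q) * (2 * q) = q * (lam * t ^ 2) - 2 * t ^ q := by
    field_simp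
  rw [this]
  linarith

lemma laneEmdenProfile_one_div_rpow (hq : 0 < q) (hq2 : q < 2) (hlam : 0 < lam) :
    laneEmdenProfile q lam ((1 / lam) ^ (1 / (2 - q))) =
      (q - 2) / (2 * q) * (1 / lam) ^ (q / (2 - q)) := by
  have h2q : 2 - q ≠ 0 := (sub_pos.2 hq2).ne'
  have hl : 0 < 1 / lam := by positivity
  have hq' : ((1 / lam) ^ (1 / (2 - q))) ^ q = (1 / lam) ^ (q / (2 - q)) := by
    rw [← Real.rpow_mul hl.le]; ring_nf
  have h2 : ((1 / lam) ^ (1 / (2 - q))) ^ 2 = (1 / lam) ^ (q / (2 - q)) * (1 / lam) := by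
    rw [← Real.rpow_natCast, ← Real.rpow_mul hl.le]
    nth_rw 3 [← Real.rpow_one (1 / lam)]
    rw [← Real.rpow_add hl]
    congr 1
    field_simp
    ring
  rw [laneEmdenProfile, hq', h2]
  field_simp

end Profile

noncomputable def laneEmdenEnergy {N : ℕ} (q : ℝ) (Ω : Set (EuclideanSpace ℝ (Fin N)))
    (φ : EuclideanSpace ℝ (Fin N) → ℝ) : ℝ :=
  (1 / 2) * (∫ x in Ω, ‖gradient φ x‖ ^ 2) - (1 / q) * (∫ x in Ω, φ x ^ q)

section LaneEmden

variable {N : ℕ} {q : ℝ} {Ω : Set (EuclideanSpace ℝ (Fin N))} {φ : EuclideanSpace ℝ (Fin N) → ℝ}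

lemma lambda2_le_integral (hφ : ContDiff ℝ (⊤ : ℕ∞) φ) (hcs : HasCompactSupport φ)
    (hΩ : tsupport φ ⊆ Ω) (hnorm : (∫ x in Ω, |φ x| ^ q) ^ (1 / q) = 1) :
    lambda2 q Ω ≤ ∫ x in Ω, ‖gradient φ x‖ ^ 2 :=
  csInf_le ⟨0, by rintro t ⟨ψ, -, -, -, -, rfl⟩; exact integral_nonneg fun _ => by positivity⟩
    ⟨φ, hφ, hcs, hΩ, hnorm, rfl⟩

lemma lambda2_mul_sq_le_integral (hq : 0 < q) (hφ : ContDiff ℝ (⊤ : ℕ∞) φ)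
    (hcs : HasCompactSupport φ) (hΩ : tsupport φ ⊆ Ω) (hφ0 : ∀ x, 0 ≤ φ x) :
    lambda2 q Ω * ((∫ x in Ω, φ x ^ q) ^ (1 / q)) ^ 2 ≤ ∫ x in Ω, ‖gradient φ x‖ ^ 2 := by
  have hI : 0 ≤ ∫ x in Ω, φ x ^ q := integral_nonneg fun x => Real.rpow_nonneg (hφ0 x) q
  have hrq : ((∫ x in Ω, φ x ^ q) ^ (1 / q)) ^ q = ∫ x in Ω, φ x ^ q := by
    rw [one_div, Real.rpow_inv_rpow hI hq.ne']
  have hr0 : 0 ≤ (∫ x in Ω, φ x ^ q) ^ (1 / q) := Real.rpow_nonneg hI _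
  generalize (∫ x in Ω, φ x ^ q) ^ (1 / q) = r at hrq hr0 ⊢
  rcases hr0.eq_or_lt with rfl | hr
  · simpa using integral_nonneg fun x => by positivity
  have hnorm : (∫ x in Ω, |r⁻¹ * φ x| ^ q) ^ (1 / q) = 1 := by
    simp_rw [abs_of_nonneg (mul_nonneg (inv_nonneg.2 hr.le) (hφ0 _)),
      Real.mul_rpow (inv_nonneg.2 hr.le) (hφ0 _)]
    rw [integral_const_mul, Real.inv_rpow hr.le, hrq,
      inv_mul_cancel₀ (hrq ▸ (Real.rpow_pos_of_pos hr q).ne'), Real.one_rpow]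
  have h := lambda2_le_integral (contDiff_const.mul hφ)
    (hcs.comp_left (g := (r⁻¹ * ·)) (mul_zero _)) ((tsupport_comp_subset (mul_zero _) φ).trans hΩ)
    hnorm
  rwa [integral_norm_gradient_const_mul_sq _ (hφ.differentiable (by simp)), inv_pow,
    ← div_eq_inv_mul, le_div_iff₀ (by positivity)] at h

lemma laneEmdenEnergy_const_mul (hφ : Differentiable ℝ φ) (hφ0 : ∀ x, 0 ≤ φ x) {c : ℝ}
    (hc : 0 ≤ c) :
    laneEmdenEnergy q Ω (fun x => c * φ x) =
      c ^ 2 * (∫ x in Ω, ‖gradient φ x‖ ^ 2) / 2 - c ^ q * (∫ x in Ω, φ x ^ q) / q := by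
  simp_rw [laneEmdenEnergy, integral_norm_gradient_const_mul_sq _ hφ,
    Real.mul_rpow hc (hφ0 _), integral_const_mul]
  ring

lemma le_laneEmdenEnergy (hq : 0 < q) (hq2 : q < 2) (hlam : 0 < lambda2 q Ω)
    (hφ : ContDiff ℝ (⊤ : ℕ∞) φ) (hcs : HasCompactSupport φ) (hΩ : tsupport φ ⊆ Ω)
    (hφ0 : ∀ x, 0 ≤ φ x) :
    (q - 2) / (2 * q) * (1 / lambda2 q Ω) ^ (q / (2 - q)) ≤ laneEmdenEnergy q Ω φ := by
  have hI : 0 ≤ ∫ x in Ω, φ x ^ q := integral_nonneg fun x => Real.rpow_nonneg (hφ0 x) q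
  have hrq : ((∫ x in Ω, φ x ^ q) ^ (1 / q)) ^ q = ∫ x in Ω, φ x ^ q := by
    rw [one_div, Real.rpow_inv_rpow hI hq.ne']
  have hpoincare := lambda2_mul_sq_le_integral hq hφ hcs hΩ hφ0
  calc _ ≤ laneEmdenProfile q (lambda2 q Ω) ((∫ x in Ω, φ x ^ q) ^ (1 / q)) :=
        le_laneEmdenProfile hq hq2 hlam (by positivity)
    _ ≤ laneEmdenEnergy q Ω φ := by
        rw [laneEmdenProfile, hrq, laneEmdenEnergy, one_div_mul_eq_div q]
        linarith

lemma exists_laneEmdenEnergy_le (hq : 0 < q) (hlam : 0 < lambda2 q Ω) {a b c : ℝ}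
    (ha : lambda2 q Ω < a) (hb : b < 1) (hc : 0 ≤ c) :
    ∃ ψ : EuclideanSpace ℝ (Fin N) → ℝ, ContDiff ℝ (⊤ : ℕ∞) ψ ∧ HasCompactSupport ψ ∧
      tsupport ψ ⊆ Ω ∧ (∀ x, 0 ≤ ψ x) ∧ laneEmdenEnergy q Ω ψ ≤ c ^ 2 * a / 2 - c ^ q * b / q := by
  have hne : { t : ℝ | ∃ φ : EuclideanSpace ℝ (Fin N) → ℝ, ContDiff ℝ (⊤ : ℕ∞) φ ∧
      HasCompactSupport φ ∧ tsupport φ ⊆ Ω ∧ (∫ x in Ω, |φ x| ^ q) ^ (1 / q) = 1 ∧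
      t = ∫ x in Ω, ‖gradient φ x‖ ^ 2 }.Nonempty :=
    Set.nonempty_iff_ne_empty.2 fun h => hlam.ne' (by rw [lambda2, h, Real.sInf_empty])
  obtain ⟨_, ⟨φ, hφ, hcs, hΩ, hnorm, rfl⟩, hφa⟩ := exists_lt_of_csInf_lt hne ha
  have hI : ∫ x in Ω, |φ x| ^ q = 1 := by
    rw [← Real.rpow_inv_rpow (integral_nonneg fun x => by positivity) hq.ne', ← one_div, hnorm,
      Real.one_rpow]
  obtain ⟨ψ, hψ, hψcs, hψφ, hψ0, hgrad, hbψ⟩ :=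
    exists_nonneg_of_lt_integral_abs_rpow (μ := volume.restrict Ω) hφ hcs hq
      (hI ▸ hb)
  refine ⟨fun x => c * ψ x, contDiff_const.mul hψ, hψcs.comp_left (mul_zero c),
    ((tsupport_comp_subset (mul_zero c) ψ).trans hψφ).trans hΩ, fun x => mul_nonneg hc (hψ0 x),
    ?_⟩
  rw [laneEmdenEnergy_const_mul (hψ.differentiable (by simp)) hψ0 hc]
  gcongr
  exact hgrad.trans hφa.le

end LaneEmden

theorem lane_emden_min_value {N : ℕ} {q : ℝ} (hq1 : 1 ≤ q) (hq2 : q < 2)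
    {Ω : Set (EuclideanSpace ℝ (Fin N))} (hlam : 0 < lambda2 q Ω) :
    sInf { t : ℝ | ∃ φ : EuclideanSpace ℝ (Fin N) → ℝ, ContDiff ℝ (⊤ : ℕ∞) φ ∧
      HasCompactSupport φ ∧ tsupport φ ⊆ Ω ∧ (∀ x, 0 ≤ φ x) ∧
      t = (1 / 2) * (∫ x in Ω, ‖gradient φ x‖ ^ 2) - (1 / q) * (∫ x in Ω, φ x ^ q) }
    = ((q - 2) / (2 * q)) * (1 / lambda2 q Ω) ^ (q / (2 - q)) := by
  have hq : 0 < q := by linarith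
  have hlower : ∀ t ∈ { t : ℝ | ∃ φ : EuclideanSpace ℝ (Fin N) → ℝ, ContDiff ℝ (⊤ : ℕ∞) φ ∧
      HasCompactSupport φ ∧ tsupport φ ⊆ Ω ∧ (∀ x, 0 ≤ φ x) ∧ t = laneEmdenEnergy q Ω φ },
      (q - 2) / (2 * q) * (1 / lambda2 q Ω) ^ (q / (2 - q)) ≤ t := by
    rintro t ⟨φ, hφ, hcs, hΩ, hφ0, rfl⟩
    exact le_laneEmdenEnergy hq hq2 hlam hφ hcs hΩ hφ0
  refine le_antisymm ?_ (le_csInf ⟨_, 0, contDiff_const, .zero, by simp, fun _ => le_rfl, rfl⟩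
    hlower)
  set t₀ := (1 / lambda2 q Ω) ^ (1 / (2 - q))
  have hlim : Tendsto (fun ε => t₀ ^ 2 * (lambda2 q Ω + ε) / 2 - t₀ ^ q * (1 - ε) / q)
      (𝓝[>] 0) (𝓝 (laneEmdenProfile q (lambda2 q Ω) t₀)) :=
    tendsto_nhdsWithin_of_tendsto_nhds
      (Continuous.tendsto' (by fun_prop) _ _ (by rw [laneEmdenProfile]; ring))
  rw [← laneEmdenProfile_one_div_rpow hq hq2 hlam]
  refine ge_of_tendsto hlim (eventually_nhdsWithin_of_forall fun ε (hε : 0 < ε) => ?_)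
  obtain ⟨φ, hφ, hcs, hΩ, hφ0, hle⟩ := exists_laneEmdenEnergy_le hq hlam
    (lt_add_of_pos_right _ hε) (sub_lt_self 1 hε) (by positivity : 0 ≤ t₀)
  exact (csInf_le ⟨_, hlower⟩ ⟨φ, hφ, hcs, hΩ, hφ0, rfl⟩).trans hle
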